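/- arXiv:2112.12403 — 8 statements merged into one kernel-verified Lean document; each statement's English description precedes it below -/
import Mathlib

section
/- Let S be a real nX × nR matrix, O a real nN × nR matrix, and μ̃ ∈ ℝ^{nN}. Suppose the consistency condition fails, i.e., there exists v ∈ ℝ^{nR} with S v = 0 and Σₘ μ̃ₘ (O v)ᵐ ≠ 0. Then for every function φ : ℝ^{nX} → ℝ and every x₀ ∈ ℝ^{nX}, the function ξ ↦ −φ(x₀ + S ξ) − Σₘ μ̃ₘ (O ξ)ᵐ on ℝ^{nR} is unbounded above; in particular it has no maximizer (no equilibrium state exists). -/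
/-- **No equilibrium state without the consistency condition.**
If there is a reaction cycle `v` (`S v = 0`) with `∑ m, μ m * (O v) m ≠ 0`, then for any
potential `φ` and any initial condition `x₀`, the total-entropy function
`ξ ↦ -φ (x₀ + S ξ) - ∑ m, μ m * (O ξ) m` is unbounded above; in particular it has no
maximizer. -/
theorem no_equilibrium_of_inconsistency
    {nX nR nN : ℕ} (S : Matrix (Fin nX) (Fin nR) ℝ) (O : Matrix (Fin nN) (Fin nR) ℝ)
    (μ : Fin nN → ℝ)
    (hex : ∃ v : Fin nR → ℝ, S.mulVec v = 0 ∧ (∑ m, μ m * O.mulVec v m) ≠ 0)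
    (φ : (Fin nX → ℝ) → ℝ) (x₀ : Fin nX → ℝ) :
    ¬ BddAbove (Set.range fun ξ : Fin nR → ℝ =>
        -φ (x₀ + S.mulVec ξ) - ∑ m, μ m * O.mulVec ξ m) ∧
    ¬ ∃ ξEQ : Fin nR → ℝ, ∀ ξ : Fin nR → ℝ,
        -φ (x₀ + S.mulVec ξ) - ∑ m, μ m * O.mulVec ξ m ≤
          -φ (x₀ + S.mulVec ξEQ) - ∑ m, μ m * O.mulVec ξEQ m := by
  obtain ⟨v, hv, hc⟩ := hex
  set c : ℝ := ∑ m, μ m * O.mulVec v m with hcdef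
  -- key: value along ξ + t • v
  have key : ∀ (ξ : Fin nR → ℝ) (t : ℝ),
      (-φ (x₀ + S.mulVec (ξ + t • v)) - ∑ m, μ m * O.mulVec (ξ + t • v) m)
        = (-φ (x₀ + S.mulVec ξ) - ∑ m, μ m * O.mulVec ξ m) - t * c := by
    intro ξ t
    have h1 : S.mulVec (ξ + t • v) = S.mulVec ξ := by
      rw [Matrix.mulVec_add, Matrix.mulVec_smul, hv]
      simp
    have h2 : (∑ m, μ m * O.mulVec (ξ + t • v) m)
        = (∑ m, μ m * O.mulVec ξ m) + t * c := by
      rw [hcdef, Finset.mul_sum, ← Finset.sum_add_distrib]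
      refine Finset.sum_congr rfl fun m _ => ?_
      rw [Matrix.mulVec_add, Matrix.mulVec_smul]
      simp [Pi.add_apply, Pi.smul_apply, smul_eq_mul]
      ring
    rw [h1, h2]; ring
  constructor
  · rintro ⟨M, hM⟩
    set t : ℝ := (-M - φ x₀ + (∑ m, μ m * O.mulVec 0 m) - 1) / c with htdef
    have ht : t * c = -M - φ x₀ + (∑ m, μ m * O.mulVec 0 m) - 1 := by
      rw [htdef, div_mul_cancel₀ _ hc]
    have h0 : S.mulVec (0 : Fin nR → ℝ) = 0 := by simp
    have := hM (Set.mem_range_self ((0 : Fin nR → ℝ) + t • v))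
    rw [key 0 t] at this
    rw [h0, ht] at this
    simp at this
    linarith
  · rintro ⟨ξEQ, hEQ⟩
    have h1 := hEQ (ξEQ + (-1/c) • v)
    rw [key ξEQ (-1/c)] at h1
    have : (-1/c) * c = -1 := by field_simp
    rw [this] at h1
    linarith
end

section
/- Let φ : ℝ^{nX} → ℝ be differentiable, strictly convex, and supercoercive (φ(x)/‖x‖ → ∞ as ‖x‖ → ∞). Let S be a real nX × nR matrix, O a real nN × nR matrix, and μ̃ ∈ ℝ^{nN}, and suppose there exists yᴾ ∈ ℝ^{nX} with Σᵢ yᴾᵢ Sⁱᵣ + Σₘ μ̃ₘ Oᵐᵣ = 0 for all r. Then for every x₀ ∈ ℝ^{nX} the function ξ ↦ −φ(x₀ + S ξ) − Σₘ μ̃ₘ (O ξ)ᵐ attains its maximum on ℝ^{nR}; i.e., an equilibrium state exists. -/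
open Filter Matrix Pointwise

/-! The consistency condition says `yᴾ ᵥ* S + μ̃ ᵥ* O = 0`, so the open-chemical term `μ̃ ⬝ᵥ O ξ`
equals `-(yᴾ ⬝ᵥ S ξ)` and the entropy is, up to a constant, `-(φ - yᴾ ⬝ᵥ ·) (x₀ + S ξ)`.
Superlinear growth of `φ` beats the linear term, so `φ - yᴾ ⬝ᵥ ·` is continuous and coercive and
therefore attains its minimum on the closed affine set `x₀ + range S`; any `ξ` reaching that
minimizer is an equilibrium. -/

theorem Matrix.dotProduct_mulVec_eq_neg_of_vecMul_add_vecMul_eq_zero {m n r R : Type*}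
    [Fintype m] [Fintype n] [Fintype r] [Ring R] {S : Matrix m r R} {O : Matrix n r R}
    {y : m → R} {μ : n → R} (h : y ᵥ* S + μ ᵥ* O = 0) (ξ : r → R) :
    μ ⬝ᵥ (O *ᵥ ξ) = -(y ⬝ᵥ (S *ᵥ ξ)) := by
  rw [eq_neg_iff_add_eq_zero, add_comm, dotProduct_mulVec, dotProduct_mulVec, ← add_dotProduct,
    h, zero_dotProduct]

theorem tendsto_sub_continuousLinearMap_cocompact_atTop {E : Type*} [NormedAddCommGroup E]
    [NormedSpace ℝ E] [ProperSpace E] {φ : E → ℝ}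
    (hφ : Tendsto (fun x => φ x / ‖x‖) (cocompact E) atTop) (ℓ : E →L[ℝ] ℝ) : Tendsto (fun x => φ x - ℓ x) (cocompact E) atTop := by
  have hnorm : Tendsto (fun x : E => ‖x‖) (cocompact E) atTop := tendsto_norm_cocompact_atTop
  have hlower : Tendsto (fun x => ‖x‖ * (φ x / ‖x‖ - ‖ℓ‖)) (cocompact E) atTop :=
    hnorm.atTop_mul_atTop₀ (tendsto_atTop_add_const_right _ _ hφ)
  refine tendsto_atTop_mono' _ ?_ hlower
  filter_upwards [hnorm.eventually_gt_atTop 0] with x hx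
  rw [mul_sub, mul_div_cancel₀ _ hx.ne']
  linarith [(le_abs_self (ℓ x)).trans (ℓ.le_opNorm x)]

theorem Continuous.exists_forall_le_comp_const_add {E F : Type*} [NormedAddCommGroup E]
    [NormedSpace ℝ E] [FiniteDimensional ℝ E] [AddCommGroup F] [Module ℝ F] {g : E → ℝ}
    (hg : Continuous g) (hcoer : Tendsto g (cocompact E) atTop) (A : F →ₗ[ℝ] E) (x₀ : E) :
    ∃ ξ, ∀ ζ, g (x₀ + A ξ) ≤ g (x₀ + A ζ) := by
  have hclosed : IsClosed (x₀ +ᵥ (LinearMap.range A : Set E)) :=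
    (LinearMap.range A).closed_of_finiteDimensional.vadd x₀
  have hx₀ : x₀ ∈ x₀ +ᵥ (LinearMap.range A : Set E) := ⟨0, zero_mem _, add_zero x₀⟩
  obtain ⟨_, ⟨_, ⟨ξ, rfl⟩, rfl⟩, hmin⟩ := hg.continuousOn.exists_isMinOn' hclosed hx₀
    ((hcoer.eventually_ge_atTop (g x₀)).filter_mono inf_le_left)
  exact ⟨ξ, fun ζ => hmin ⟨A ζ, ⟨ζ, rfl⟩, rfl⟩⟩

theorem equilibrium_exists_of_consistency_general
    {nX nR nN : ℕ} (φ : (Fin nX → ℝ) → ℝ)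
    (hdiff : Differentiable ℝ φ)
    (hcoer : Filter.Tendsto (fun x => φ x / ‖x‖) (Filter.cocompact (Fin nX → ℝ))
      Filter.atTop)
    (S : Matrix (Fin nX) (Fin nR) ℝ) (O : Matrix (Fin nN) (Fin nR) ℝ)
    (μ : Fin nN → ℝ)
    (hyP : ∃ yP : Fin nX → ℝ, ∀ r, (∑ i, yP i * S i r) + (∑ m, μ m * O m r) = 0)
    (x₀ : Fin nX → ℝ) :
    ∃ ξEQ : Fin nR → ℝ, ∀ ξ : Fin nR → ℝ,
      -φ (x₀ + S.mulVec ξ) - ∑ m, μ m * O.mulVec ξ m ≤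
        -φ (x₀ + S.mulVec ξEQ) - ∑ m, μ m * O.mulVec ξEQ m := by
  obtain ⟨yP, hyP⟩ := hyP
  have hbalance : yP ᵥ* S + μ ᵥ* O = 0 := funext hyP
  let ℓ := LinearMap.toContinuousLinearMap (dotProductBilin ℝ ℝ yP)
  have hentropy : ∀ ξ, -φ (x₀ + S *ᵥ ξ) - μ ⬝ᵥ (O *ᵥ ξ) =
      -(φ (x₀ + S *ᵥ ξ) - ℓ (x₀ + S *ᵥ ξ)) - yP ⬝ᵥ x₀ := fun ξ => by
    rw [dotProduct_mulVec_eq_neg_of_vecMul_add_vecMul_eq_zero hbalance]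
    simp only [ℓ, LinearMap.coe_toContinuousLinearMap', dotProductBilin, LinearMap.coe_mk,
      AddHom.coe_mk, dotProduct_add]
    ring
  obtain ⟨ξEQ, hmin⟩ := Continuous.exists_forall_le_comp_const_add (g := fun x => φ x - ℓ x)
    (hdiff.continuous.sub ℓ.continuous) (tendsto_sub_continuousLinearMap_cocompact_atTop hcoer ℓ)
    S.mulVecLin x₀
  refine ⟨ξEQ, fun ξ => ?_⟩
  change _ - μ ⬝ᵥ (O *ᵥ ξ) ≤ _ - μ ⬝ᵥ (O *ᵥ ξEQ)
  rw [hentropy, hentropy]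
  exact sub_le_sub_right (neg_le_neg (hmin ξ)) _

/-- **Existence of an equilibrium state under the consistency condition.**
If `φ` is differentiable, strictly convex and supercoercive, and the equilibrium equations
`∑ i, yP i * S i r + ∑ m, μ m * O m r = 0` have a solution `yP`, then for every initial
condition `x₀` the total-entropy function `ξ ↦ -φ (x₀ + S ξ) - ∑ m, μ m * (O ξ) m`
attains its maximum. -/
theorem equilibrium_exists_of_consistency
    {nX nR nN : ℕ} (φ : (Fin nX → ℝ) → ℝ)
    (hdiff : Differentiable ℝ φ)
    (hconv : StrictConvexOn ℝ Set.univ φ)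
    (hcoer : Filter.Tendsto (fun x => φ x / ‖x‖) (Filter.cocompact (Fin nX → ℝ))
      Filter.atTop)
    (S : Matrix (Fin nX) (Fin nR) ℝ) (O : Matrix (Fin nN) (Fin nR) ℝ)
    (μ : Fin nN → ℝ)
    (hyP : ∃ yP : Fin nX → ℝ, ∀ r, (∑ i, yP i * S i r) + (∑ m, μ m * O m r) = 0)
    (x₀ : Fin nX → ℝ) :
    ∃ ξEQ : Fin nR → ℝ, ∀ ξ : Fin nR → ℝ,
      -φ (x₀ + S.mulVec ξ) - ∑ m, μ m * O.mulVec ξ m ≤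
        -φ (x₀ + S.mulVec ξEQ) - ∑ m, μ m * O.mulVec ξEQ m :=
  equilibrium_exists_of_consistency_general φ hdiff hcoer S O μ hyP x₀
end

section
/- Let E be a finite-dimensional real inner product space, and let φ : E → ℝ be differentiable, strictly convex, and supercoercive (φ(x)/‖x‖ → ∞ as ‖x‖ → ∞). Let V ⊆ E be a linear subspace and x₀, yᴾ ∈ E. Then there exists a unique x_EQ ∈ x₀ + V such that ∇φ(x_EQ) − yᴾ ∈ V^⊥; moreover x_EQ is the unique maximizer of the function x ↦ ⟨yᴾ, x⟩ − φ(x) over the affine subspace x₀ + V. -/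
open scoped RealInnerProductSpace
open Set Filter

/-!
Let `f x = φ x - ⟪yP, x⟫`. It is strictly convex and, by supercoercivity, tends to `+∞` at
infinity, so it attains its minimum on the closed affine subspace `x₀ + V`. By Fermat's rule the
gradient `∇φ - yP` of `f` at the minimizer is orthogonal to `V`. Conversely, by the strict
first-order convexity inequality, any point of `x₀ + V` where `∇φ - yP ∈ Vᗮ` is a strict minimizer
of `f` on `x₀ + V`; this gives both uniqueness and the maximization property.
-/

theorem StrictConvexOn.comp_affineMap {𝕜 E F β : Type*} [Field 𝕜] [LinearOrder 𝕜]
    [IsStrictOrderedRing 𝕜] [AddCommGroup E] [Module 𝕜 E] [AddCommGroup F] [Module 𝕜 F]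
    [AddCommMonoid β] [PartialOrder β] [SMul 𝕜 β]
    {f : F → β} {s : Set F} (g : E →ᵃ[𝕜] F) (hg : Function.Injective g)
    (hf : StrictConvexOn 𝕜 s f) : StrictConvexOn 𝕜 (g ⁻¹' s) (f ∘ g) :=
  ⟨hf.1.affine_preimage g, fun x hx y hy hxy a b ha hb hab => by
    simpa only [Function.comp_apply, Convex.combo_affine_apply hab] using
      hf.2 hx hy (hg.ne hxy) ha hb hab⟩

section NormedSpace

variable {E : Type*} [NormedAddCommGroup E] [NormedSpace ℝ E] {f : E → ℝ} {f' : E →L[ℝ] ℝ}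
  {s : Set E} {x y : E}

theorem StrictConvexOn.lt_of_hasFDerivAt (hf : StrictConvexOn ℝ s f) (hx : x ∈ s) (hy : y ∈ s)
    (hxy : x ≠ y) (hf' : HasFDerivAt f f' x) : f x + f' (y - x) < f y := by
  have hline : StrictConvexOn ℝ (AffineMap.lineMap x y ⁻¹' s) (f ∘ AffineMap.lineMap x y) :=
    hf.comp_affineMap _ (AffineMap.lineMap_injective ℝ hxy)
  have hderiv : HasDerivAt (f ∘ AffineMap.lineMap x y) (f' (y - x)) (0 : ℝ) := by
    have hf'0 : HasFDerivAt f f' (AffineMap.lineMap x y (0 : ℝ)) := by simpa using hf'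
    exact hf'0.comp_hasDerivAt _ AffineMap.hasDerivAt_lineMap
  have := hline.lt_slope_of_hasDerivAt (x := 0) (y := 1) (by simpa using hx) (by simpa using hy)
    zero_lt_one hderiv
  simp only [slope_def_field, Function.comp_apply, AffineMap.lineMap_apply_zero,
    AffineMap.lineMap_apply_one, sub_zero, div_one] at this
  linarith

theorem IsMinOn.hasFDerivAt_eq_zero_of_mem_direction {A : AffineSubspace ℝ E}
    (hmin : IsMinOn f A x) (hx : x ∈ A) (hf' : HasFDerivAt f f' x) {v : E}
    (hv : v ∈ A.direction) : f' v = 0 := by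
  have hcone : ∀ w ∈ A.direction, w ∈ posTangentConeAt (A : Set E) x := fun w hw =>
    mem_posTangentConeAt_of_segment_subset
      (A.convex.segment_subset hx
        (by simpa [add_comm] using AffineSubspace.vadd_mem_of_mem_direction hw hx))
  exact hmin.localize.hasFDerivWithinAt_eq_zero hf'.hasFDerivWithinAt (hcone v hv)
    (hcone (-v) (A.direction.neg_mem hv))

theorem tendsto_sub_cocompact_atTop [ProperSpace E] (ℓ : E →L[ℝ] ℝ)
    (hf : Tendsto (fun x => f x / ‖x‖) (cocompact E) atTop) :
    Tendsto (fun x => f x - ℓ x) (cocompact E) atTop := by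
  have hprod : Tendsto (fun x => ‖x‖ * (f x / ‖x‖ - ‖ℓ‖)) (cocompact E) atTop :=
    tendsto_norm_cocompact_atTop.atTop_mul_atTop₀ (tendsto_atTop_add_const_right _ _ hf)
  refine tendsto_atTop_mono' _ ?_ hprod
  filter_upwards [tendsto_norm_cocompact_atTop.eventually_gt_atTop 0] with x hx
  rw [mul_sub, mul_div_cancel₀ _ hx.ne']
  linarith [(le_abs_self (ℓ x)).trans (ℓ.le_opNorm x)]

end NormedSpace

theorem Continuous.exists_isMinOn_of_tendsto_cocompact {α β : Type*} [TopologicalSpace β]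
    [LinearOrder α] [TopologicalSpace α] [ClosedIicTopology α] {f : β → α} {s : Set β}
    (hf : Continuous f) (hlim : Tendsto f (cocompact β) atTop) (hs : IsClosed s)
    (hne : s.Nonempty) : ∃ x ∈ s, IsMinOn f s x :=
  hf.continuousOn.exists_isMinOn' hs hne.some_mem
    ((hlim.eventually (eventually_ge_atTop _)).filter_mono inf_le_left)

section InnerProductSpace

variable {E : Type*} [NormedAddCommGroup E] [InnerProductSpace ℝ E] [CompleteSpace E]
  {f : E → ℝ} {g x : E}

theorem HasGradientAt.sub_inner (hf : HasGradientAt f g x) (y : E) :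
    HasGradientAt (fun z => f z - ⟪y, z⟫) (g - y) x := by
  rw [hasGradientAt_iff_hasFDerivAt, map_sub] at *
  exact hf.sub (innerSL ℝ y).hasFDerivAt

theorem IsMinOn.hasGradientAt_mem_orthogonal {A : AffineSubspace ℝ E} (hmin : IsMinOn f A x)
    (hx : x ∈ A) (hf : HasGradientAt f g x) : g ∈ A.directionᗮ :=
  (A.direction.mem_orthogonal' g).2 fun _ hv =>
    hmin.hasFDerivAt_eq_zero_of_mem_direction hx hf.hasFDerivAt hv

theorem StrictConvexOn.lt_of_hasGradientAt_mem_orthogonal {A : AffineSubspace ℝ E}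
    (hf : StrictConvexOn ℝ A f) (hx : x ∈ A) (hg : HasGradientAt f g x)
    (hgA : g ∈ A.directionᗮ) {z : E} (hz : z ∈ A) (hzx : z ≠ x) : f x < f z := by
  have hflat : ⟪g, z - x⟫ = 0 :=
    A.direction.inner_left_of_mem_orthogonal (A.vsub_mem_direction hz hx) hgA
  simpa [hflat] using hf.lt_of_hasFDerivAt hx hz hzx.symm hg.hasFDerivAt

end InnerProductSpace

/-- **Existence and uniqueness of the equilibrium state.**
For a differentiable, strictly convex and supercoercive potential `φ` on a
finite-dimensional real inner product space, a linear subspace `V` (the stoichiometric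
subspace) and points `x₀`, `yP`, there is a unique point `xEQ` of the stoichiometric
manifold `x₀ + V` with `∇φ xEQ - yP ∈ Vᗮ`; moreover this `xEQ` is the unique maximizer
of `x ↦ ⟪yP, x⟫ - φ x` over `x₀ + V`. -/
theorem equilibrium_state_exists_unique
    {E : Type*} [NormedAddCommGroup E] [InnerProductSpace ℝ E] [FiniteDimensional ℝ E]
    (φ : E → ℝ) (hdiff : Differentiable ℝ φ)
    (hconv : StrictConvexOn ℝ Set.univ φ)
    (hcoer : Filter.Tendsto (fun x => φ x / ‖x‖) (Filter.cocompact E) Filter.atTop)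
    (V : Submodule ℝ E) (x₀ yP : E) :
    ∃ xEQ : E, (xEQ - x₀ ∈ V ∧ gradient φ xEQ - yP ∈ Vᗮ) ∧
      (∀ x : E, x - x₀ ∈ V → gradient φ x - yP ∈ Vᗮ → x = xEQ) ∧
      (∀ x : E, x - x₀ ∈ V → x ≠ xEQ → ⟪yP, x⟫ - φ x < ⟪yP, xEQ⟫ - φ xEQ) := by
  -- `x ∈ A` unfolds to `x - x₀ ∈ V`, so the two are used interchangeably below.
  set A := AffineSubspace.mk' x₀ V
  have hdirA : A.direction = V := AffineSubspace.direction_mk' x₀ V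
  set f : E → ℝ := fun x => φ x - ⟪yP, x⟫
  have hgrad (x : E) : HasGradientAt f (gradient φ x - yP) x :=
    (hdiff x).hasGradientAt.sub_inner yP
  have hfA : StrictConvexOn ℝ A f := (hconv.subset (subset_univ _) A.convex).sub_concaveOn
    ((innerSL ℝ yP).toLinearMap.concaveOn A.convex)
  have hcont : Continuous f := continuous_iff_continuousAt.2 fun x => (hgrad x).continuousAt
  obtain ⟨xEQ, hxA, hmin⟩ := hcont.exists_isMinOn_of_tendsto_cocompact
    (tendsto_sub_cocompact_atTop (innerSL ℝ yP) hcoer) A.closed_of_finiteDimensional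
    (AffineSubspace.mk'_nonempty x₀ V)
  have hcrit : gradient φ xEQ - yP ∈ Vᗮ :=
    hdirA ▸ hmin.hasGradientAt_mem_orthogonal hxA (hgrad xEQ)
  have hstrict (x : E) (hx : x ∈ A) (hcx : gradient φ x - yP ∈ Vᗮ) (z : E) (hz : z ∈ A)
      (hzx : z ≠ x) : f x < f z :=
    hfA.lt_of_hasGradientAt_mem_orthogonal hx (hgrad x) (hdirA ▸ hcx) hz hzx
  refine ⟨xEQ, ⟨hxA, hcrit⟩, fun x hx hcx => ?_, fun x hx hne => ?_⟩
  · by_contra hne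
    exact (hstrict x hx hcx xEQ hxA (Ne.symm hne)).not_ge (hmin hx)
  · have := hstrict xEQ hxA hcrit x hx hne
    simp only [f] at this
    linarith
end

section
/- Let E be a real inner product space and φ : E → ℝ differentiable with gradient ∇φ. Let V ⊆ E be a linear subspace, x₀, yᴾ ∈ E, and let x_EQ ∈ E satisfy x₀ − x_EQ ∈ V and ∇φ(x_EQ) − yᴾ ∈ V^⊥. Then (⟨yᴾ, x_EQ⟩ − φ(x_EQ)) − (⟨yᴾ, x₀⟩ − φ(x₀)) = D[x₀‖x_EQ]. That is, the total entropy production during a relaxation from x₀ to the equilibrium state x_EQ equals (Ω/T̃ times) the Bregman divergence D[x₀‖x_EQ]. -/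
open scoped RealInnerProductSpace

/-- **Entropy production of a relaxation is the Bregman divergence.**
Let `φ` be differentiable with gradient map `g`, `V` a linear subspace, and suppose
`xEQ` satisfies `x₀ - xEQ ∈ V` and `g xEQ - yP ∈ Vᗮ`.  Then
`(⟪yP, xEQ⟫ - φ xEQ) - (⟪yP, x₀⟫ - φ x₀) = D[x₀‖xEQ]`,
i.e. the total entropy production during the relaxation from `x₀` to the equilibrium
state `xEQ` equals (Ω/T̃ times) the Bregman divergence `D[x₀‖xEQ]`. -/
theorem entropy_production_eq_bregman_divergence
    {E : Type*} [NormedAddCommGroup E] [InnerProductSpace ℝ E]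
    (φ : E → ℝ) (g : E → E) (hg : ∀ x, HasFDerivAt φ (innerSL ℝ (g x)) x)
    (V : Submodule ℝ E) (x₀ yP xEQ : E)
    (hmem : x₀ - xEQ ∈ V) (heq : g xEQ - yP ∈ Vᗮ) :
    (⟪yP, xEQ⟫ - φ xEQ) - (⟪yP, x₀⟫ - φ x₀) =
      φ x₀ - φ xEQ - ⟪g xEQ, x₀ - xEQ⟫ := by
  have h : ⟪g xEQ - yP, x₀ - xEQ⟫ = 0 := by rw [real_inner_comm]; exact heq _ hmem
  have h2 : ⟪g xEQ, x₀ - xEQ⟫ = ⟪yP, x₀ - xEQ⟫ := by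
    have := h; rw [inner_sub_left] at this; linarith
  rw [h2]
  simp [inner_sub_right]; ring
end

section
/- Let E be a real inner product space and φ : E → ℝ differentiable with gradient ∇φ. Let V ⊆ E be a linear subspace and x, x', x'' ∈ E with x − x' ∈ V and ∇φ(x') − ∇φ(x'') ∈ V^⊥. Then the generalized Pythagorean theorem holds: D[x‖x'] + D[x'‖x''] = D[x‖x'']. -/
open scoped RealInnerProductSpace

/-- **Generalized Pythagorean theorem for the Bregman divergence.**
Let `φ` be differentiable with gradient map `g`, `V` a linear subspace, and let
`x, x', x''` satisfy `x - x' ∈ V` and `g x' - g x'' ∈ Vᗮ`.  Then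
`D[x‖x'] + D[x'‖x''] = D[x‖x'']`. -/
theorem generalized_pythagorean_theorem
    {E : Type*} [NormedAddCommGroup E] [InnerProductSpace ℝ E]
    (φ : E → ℝ) (g : E → E) (hg : ∀ z, HasFDerivAt φ (innerSL ℝ (g z)) z)
    (V : Submodule ℝ E) (x x' x'' : E)
    (h₁ : x - x' ∈ V) (h₂ : g x' - g x'' ∈ Vᗮ) :
    (φ x - φ x' - ⟪g x', x - x'⟫) + (φ x' - φ x'' - ⟪g x'', x' - x''⟫) =
      φ x - φ x'' - ⟪g x'', x - x''⟫ := by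
  have h0 : ⟪x - x', g x' - g x''⟫ = 0 := h₂ (x - x') h₁
  simp only [inner_sub_left, inner_sub_right] at h0 ⊢
  have := real_inner_comm (x - x') (g x')
  simp only [inner_sub_left, inner_sub_right] at this
  linarith [real_inner_comm x (g x'), real_inner_comm x' (g x'),
    real_inner_comm x (g x''), real_inner_comm x' (g x'')]
end

section
/- Let E be a finite-dimensional real inner product space, and let φ : E → ℝ be differentiable, strictly convex, and supercoercive (φ(x)/‖x‖ → ∞ as ‖x‖ → ∞), with Legendre transform φ*(y) := sup_{x ∈ E} (⟨y, x⟩ − φ(x)). Let V ⊆ E be a linear subspace and x₀, yᴾ ∈ E, let x_EQ be the unique point of x₀ + V with ∇φ(x_EQ) − yᴾ ∈ V^⊥, and set y⁰ := ∇φ(x₀), y^EQ := ∇φ(x_EQ). Then y^EQ is the unique minimizer of y' ↦ φ*(y') − φ*(y⁰) − ⟨x₀, y' − y⁰⟩ over the affine subspace yᴾ + V^⊥, and the minimum value equals D[x₀‖x_EQ], the total entropy production (up to the factor Ω/T̃) during the relaxation from x₀ to x_EQ. -/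
open scoped RealInnerProductSpace

section Aux
variable {E : Type*} [NormedAddCommGroup E] [InnerProductSpace ℝ E] [FiniteDimensional ℝ E]

lemma my_dirDeriv (φ : E → ℝ) (hdiff : Differentiable ℝ φ) (x v : E) (t0 : ℝ) :
    HasDerivAt (fun t : ℝ => φ (x + t • v)) ⟪gradient φ (x + t0 • v), v⟫ t0 := by
  have line : HasDerivAt (fun t : ℝ => x + t • v) v t0 := by
    simpa using ((hasDerivAt_id t0).smul_const v).const_add x
  have h := (hdiff (x + t0 • v)).hasFDerivAt.comp_hasDerivAt t0 line
  have hg : fderiv ℝ φ (x + t0 • v) v = ⟪gradient φ (x + t0 • v), v⟫ := by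
    rw [gradient, ← InnerProductSpace.toDual_apply_apply,
      (InnerProductSpace.toDual ℝ E).apply_symm_apply]
  rwa [hg] at h

lemma my_subgrad (φ : E → ℝ) (hdiff : Differentiable ℝ φ)
    (hconv : ConvexOn ℝ Set.univ φ) (x z : E) :
    ⟪gradient φ x, z - x⟫ ≤ φ z - φ x := by
  set v := z - x with hv
  have key := my_dirDeriv φ hdiff x v 0
  simp only [zero_smul, add_zero] at key
  have hf : ConvexOn ℝ Set.univ (fun t : ℝ => φ (x + t • v)) := by
    have := hconv.comp_affineMap (AffineMap.lineMap x z : ℝ →ᵃ[ℝ] E)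
    simpa [Function.comp_def, AffineMap.lineMap_apply, hv, add_comm] using this
  have := hf.le_slope_of_hasDerivAt (Set.mem_univ 0) (Set.mem_univ 1) one_pos key
  simpa [slope, hv] using this

lemma my_bdd (φ : E → ℝ) (hdiff : Differentiable ℝ φ)
    (hcoer : Filter.Tendsto (fun x => φ x / ‖x‖) (Filter.cocompact E) Filter.atTop)
    (y : E) : BddAbove (Set.range fun x => ⟪y, x⟫ - φ x) := by
  have h1 : ∀ᶠ x in Filter.cocompact E, ‖y‖ + 1 ≤ φ x / ‖x‖ :=
    hcoer.eventually_ge_atTop _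
  rw [Filter.hasBasis_cocompact.eventually_iff] at h1
  obtain ⟨K, hK, hKx⟩ := h1
  have hcont : Continuous fun x : E => ⟪y, x⟫ - φ x :=
    (continuous_const.inner continuous_id).sub hdiff.continuous
  obtain ⟨C, hC⟩ := (hK.image hcont).bddAbove
  refine ⟨max C 0, ?_⟩
  rintro _ ⟨x, rfl⟩
  by_cases hx : x ∈ K
  · exact le_trans (hC ⟨x, hx, rfl⟩) (le_max_left _ _)
  · have h2 := hKx hx
    have hx0 : x ≠ 0 := by
      rintro rfl
      simp at h2
      nlinarith [norm_nonneg y]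
    have hxn : (0:ℝ) < ‖x‖ := norm_pos_iff.mpr hx0
    rw [le_div_iff₀ hxn] at h2
    have h3 : ⟪y, x⟫ ≤ ‖y‖ * ‖x‖ := real_inner_le_norm y x
    have : ⟪y, x⟫ - φ x ≤ 0 := by nlinarith
    exact le_trans this (le_max_right _ _)

lemma my_fenchel_le (φ : E → ℝ) (hdiff : Differentiable ℝ φ)
    (hcoer : Filter.Tendsto (fun x => φ x / ‖x‖) (Filter.cocompact E) Filter.atTop)
    (φstar : E → ℝ) (hφstar : ∀ y : E, φstar y = ⨆ x : E, (⟪y, x⟫ - φ x))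
    (y x : E) : ⟪y, x⟫ - φ x ≤ φstar y := by
  rw [hφstar]
  exact le_ciSup (my_bdd φ hdiff hcoer y) x

lemma my_fenchel_eq (φ : E → ℝ) (hdiff : Differentiable ℝ φ)
    (hconv : ConvexOn ℝ Set.univ φ)
    (hcoer : Filter.Tendsto (fun x => φ x / ‖x‖) (Filter.cocompact E) Filter.atTop)
    (φstar : E → ℝ) (hφstar : ∀ y : E, φstar y = ⨆ x : E, (⟪y, x⟫ - φ x))
    (x : E) : φstar (gradient φ x) = ⟪gradient φ x, x⟫ - φ x := by
  refine le_antisymm ?_ (my_fenchel_le φ hdiff hcoer φstar hφstar _ x)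
  rw [hφstar]
  refine ciSup_le fun z => ?_
  have h := my_subgrad φ hdiff hconv x z
  rw [inner_sub_right] at h
  linarith

lemma my_fenchel_lt (φ : E → ℝ) (hdiff : Differentiable ℝ φ)
    (hcoer : Filter.Tendsto (fun x => φ x / ‖x‖) (Filter.cocompact E) Filter.atTop)
    (φstar : E → ℝ) (hφstar : ∀ y : E, φstar y = ⨆ x : E, (⟪y, x⟫ - φ x))
    (y' x : E) (hne : y' ≠ gradient φ x) : ⟪y', x⟫ - φ x < φstar y' := by
  set v := y' - gradient φ x with hv
  have hv0 : v ≠ 0 := sub_ne_zero.mpr hne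
  have key := my_dirDeriv φ hdiff x v 0
  simp only [zero_smul, add_zero] at key
  have hd : ⟪gradient φ x, v⟫ < ⟪y', v⟫ := by
    have h1 : ⟪y', v⟫ - ⟪gradient φ x, v⟫ = ‖v‖ ^ 2 := by
      rw [← inner_sub_left, ← hv, real_inner_self_eq_norm_sq]
    have h2 : (0:ℝ) < ‖v‖ ^ 2 := by
      have := norm_pos_iff.mpr hv0
      positivity
    linarith
  have hslope := hasDerivAt_iff_tendsto_slope.mp key
  have hev : ∀ᶠ t in nhdsWithin (0:ℝ) {(0:ℝ)}ᶜ,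
      slope (fun t : ℝ => φ (x + t • v)) 0 t < ⟪y', v⟫ :=
    hslope.eventually (Filter.Tendsto.eventually_lt_const hd Filter.tendsto_id) |>.mono fun t ht => ht
  have hle : nhdsWithin (0:ℝ) (Set.Ioi 0) ≤ nhdsWithin (0:ℝ) {(0:ℝ)}ᶜ :=
    nhdsWithin_mono 0 fun t ht => ne_of_gt ht
  obtain ⟨t, hts, htpos⟩ := ((hev.filter_mono hle).and self_mem_nhdsWithin).exists
  have htpos' : (0:ℝ) < t := htpos
  rw [slope_def_field] at hts
  have hts' : (φ (x + t • v) - φ x) / t < ⟪y', v⟫ := by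
    simpa [div_eq_inv_mul] using hts
  rw [div_lt_iff₀ htpos'] at hts'
  have hF := my_fenchel_le φ hdiff hcoer φstar hφstar y' (x + t • v)
  rw [inner_add_right, real_inner_smul_right] at hF
  nlinarith

end Aux

/-- **The equilibrium chemical potential minimizes the dual divergence over the
equilibrium manifold.**
Let `φ` be differentiable, strictly convex and supercoercive on a finite-dimensional real
inner product space, with Legendre transform `φ*`.  Let `V` be a linear subspace,
`xEQ` the point of `x₀ + V` with `∇φ xEQ - yP ∈ Vᗮ`, and set `y⁰ := ∇φ x₀`,
`yEQ := ∇φ xEQ`.  Then `yEQ` uniquely minimizes the dual divergence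
`y' ↦ D*[y'‖y⁰] = φ* y' - φ* y⁰ - ⟪x₀, y' - y⁰⟫` over the affine subspace `yP + Vᗮ`,
and the minimum value equals `D[x₀‖xEQ]`, the total entropy production (up to Ω/T̃)
during the relaxation from `x₀` to `xEQ`. -/
theorem equilibrium_minimizes_dual_divergence
    {E : Type*} [NormedAddCommGroup E] [InnerProductSpace ℝ E] [FiniteDimensional ℝ E]
    (φ : E → ℝ) (hdiff : Differentiable ℝ φ)
    (hconv : StrictConvexOn ℝ Set.univ φ)
    (hcoer : Filter.Tendsto (fun x => φ x / ‖x‖) (Filter.cocompact E) Filter.atTop)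
    (φstar : E → ℝ) (hφstar : ∀ y : E, φstar y = ⨆ x : E, (⟪y, x⟫ - φ x))
    (V : Submodule ℝ E) (x₀ yP xEQ : E)
    (hEQmem : xEQ - x₀ ∈ V) (hEQ : gradient φ xEQ - yP ∈ Vᗮ) :
    (∀ y' : E, y' - yP ∈ Vᗮ → y' ≠ gradient φ xEQ →
        φstar (gradient φ xEQ) - φstar (gradient φ x₀) -
            ⟪x₀, gradient φ xEQ - gradient φ x₀⟫ <
          φstar y' - φstar (gradient φ x₀) - ⟪x₀, y' - gradient φ x₀⟫) ∧
      φstar (gradient φ xEQ) - φstar (gradient φ x₀) -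
          ⟪x₀, gradient φ xEQ - gradient φ x₀⟫ =
        φ x₀ - φ xEQ - ⟪gradient φ xEQ, x₀ - xEQ⟫ := by
  have h2 : φstar (gradient φ xEQ) = ⟪gradient φ xEQ, xEQ⟫ - φ xEQ :=
    my_fenchel_eq φ hdiff hconv.convexOn hcoer φstar hφstar xEQ
  have h0 : φstar (gradient φ x₀) = ⟪gradient φ x₀, x₀⟫ - φ x₀ :=
    my_fenchel_eq φ hdiff hconv.convexOn hcoer φstar hφstar x₀
  constructor
  · intro y' hy' hne
    have h1 : ⟪y', xEQ⟫ - φ xEQ < φstar y' :=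
      my_fenchel_lt φ hdiff hcoer φstar hφstar y' xEQ hne
    have hmem : y' - gradient φ xEQ ∈ Vᗮ := by
      have := Vᗮ.sub_mem hy' hEQ
      simpa using this
    have horth : ⟪xEQ - x₀, y' - gradient φ xEQ⟫ = 0 :=
      (Submodule.mem_orthogonal V _).mp hmem _ hEQmem
    rw [inner_sub_left, inner_sub_right, inner_sub_right] at horth
    simp only [inner_sub_right]
    have c1 : ⟪gradient φ xEQ, xEQ⟫ = ⟪xEQ, gradient φ xEQ⟫ := real_inner_comm _ _
    have c2 : ⟪y', xEQ⟫ = ⟪xEQ, y'⟫ := real_inner_comm _ _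
    linarith
  · simp only [inner_sub_right]
    have c1 : ⟪gradient φ xEQ, xEQ⟫ = ⟪xEQ, gradient φ xEQ⟫ := real_inner_comm _ _
    have c2 : ⟪gradient φ x₀, x₀⟫ = ⟪x₀, gradient φ x₀⟫ := real_inner_comm _ _
    have c3 : ⟪gradient φ xEQ, x₀⟫ = ⟪x₀, gradient φ xEQ⟫ := real_inner_comm _ _
    have c4 : ⟪gradient φ xEQ, x₀ - xEQ⟫ = ⟪gradient φ xEQ, x₀⟫ - ⟪gradient φ xEQ, xEQ⟫ :=
      inner_sub_right _ _ _
    linarith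
end

section
/- Let E be a finite-dimensional real inner product space, and let φ : E → ℝ be differentiable, strictly convex, and supercoercive (φ(x)/‖x‖ → ∞ as ‖x‖ → ∞), with Legendre transform φ*(y) := sup_{x ∈ E} (⟨y, x⟩ − φ(x)). Let V ⊆ E be a linear subspace and x₀, yᴾ ∈ E, and let x_EQ be the unique point of x₀ + V with ∇φ(x_EQ) − yᴾ ∈ V^⊥. Then the function x ↦ φ*(yᴾ) − φ*(∇φ(x)) − ⟨x, yᴾ − ∇φ(x)⟩ (the dual divergence D*[yᴾ‖∇φ(x)]) is uniquely minimized over x ∈ x₀ + V at x = x_EQ. -/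
open scoped RealInnerProductSpace

/-- Strict gradient inequality for a strictly convex differentiable function. -/
lemma aux_grad_lt {E : Type*} [NormedAddCommGroup E] [InnerProductSpace ℝ E]
    [FiniteDimensional ℝ E]
    (φ : E → ℝ) (hdiff : Differentiable ℝ φ)
    (hconv : StrictConvexOn ℝ Set.univ φ) {a b : E} (hab : b ≠ a) :
    ⟪gradient φ a, b - a⟫ < φ b - φ a := by
  set L : ℝ → E := fun t => a + t • (b - a) with hL
  have hba : b - a ≠ 0 := sub_ne_zero.mpr hab
  have hLinj : Function.Injective L := by
    intro s t hst
    have h1 : s • (b - a) = t • (b - a) := by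
      simp only [hL] at hst
      exact add_left_cancel hst
    have h2 : (s - t) • (b - a) = 0 := by
      rw [sub_smul, h1, sub_self]
    rcases smul_eq_zero.mp h2 with h | h
    · linarith [sub_eq_zero.mp h]
    · exact absurd h hba
  have hg : StrictConvexOn ℝ (Set.univ : Set ℝ) (φ ∘ L) := by
    refine ⟨convex_univ, ?_⟩
    intro s _ t _ hst p q hp hq hpq
    have hq1 : q = 1 - p := by linarith
    subst hq1
    have hcomb : L (p • s + (1 - p) • t) = p • L s + (1 - p) • L t := by
      simp only [hL, smul_eq_mul]
      module
    have hLst : L s ≠ L t := fun h => hst (hLinj h)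
    have := hconv.2 (Set.mem_univ (L s)) (Set.mem_univ (L t)) hLst hp hq hpq
    simp only [Function.comp_apply, smul_eq_mul]
    rw [show p * s + (1 - p) * t = p • s + (1 - p) • t from rfl, hcomb]
    exact this
  have hderiv : HasDerivAt (φ ∘ L) ⟪gradient φ a, b - a⟫ 0 := by
    have h1 : HasDerivAt L (b - a) 0 := by
      have : HasDerivAt (fun t : ℝ => t • (b - a)) ((1 : ℝ) • (b - a)) 0 :=
        (hasDerivAt_id 0).smul_const (b - a)
      simpa [hL] using this.const_add a
    have h2 : HasFDerivAt φ ((InnerProductSpace.toDual ℝ E) (gradient φ a)) (L 0) := by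
      have := (hdiff a).hasGradientAt.hasFDerivAt
      simpa [hL] using this
    have h3 := h2.comp_hasDerivAt 0 h1
    simpa [hL] using h3
  have key := hg.lt_slope_of_hasDerivAt (Set.mem_univ (0 : ℝ)) (Set.mem_univ (1 : ℝ))
    one_pos hderiv
  have hs : slope (φ ∘ L) 0 1 = φ b - φ a := by
    simp [slope, hL]
  rw [hs] at key
  exact key

/-- Fenchel equality: the Legendre transform at the gradient. -/
lemma aux_fenchel {E : Type*} [NormedAddCommGroup E] [InnerProductSpace ℝ E]
    [FiniteDimensional ℝ E]
    (φ : E → ℝ) (hdiff : Differentiable ℝ φ)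
    (hconv : StrictConvexOn ℝ Set.univ φ) (x : E) :
    (⨆ z : E, (⟪gradient φ x, z⟫ - φ z)) = ⟪gradient φ x, x⟫ - φ x := by
  have hub : ∀ z : E, ⟪gradient φ x, z⟫ - φ z ≤ ⟪gradient φ x, x⟫ - φ x := by
    intro z
    rcases eq_or_ne z x with rfl | hzx
    · exact le_rfl
    · have := aux_grad_lt φ hdiff hconv hzx
      rw [inner_sub_right] at this
      linarith
  refine le_antisymm (ciSup_le hub) ?_
  exact le_ciSup ⟨_, Set.forall_mem_range.mpr hub⟩ x

/-- **The equilibrium state minimizes the dual divergence over the image of the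
stoichiometric manifold.**
Let `φ` be differentiable, strictly convex and supercoercive on a finite-dimensional real
inner product space, with Legendre transform `φ*`.  Let `V` be a linear subspace and
`xEQ` the point of `x₀ + V` with `∇φ xEQ - yP ∈ Vᗮ`.  Then the dual divergence
`x ↦ D*[yP‖∇φ x] = φ* yP - φ* (∇φ x) - ⟪x, yP - ∇φ x⟫` is uniquely minimized over
`x ∈ x₀ + V` at `x = xEQ`. -/
theorem equilibrium_minimizes_dual_divergence_on_stoichiometric_manifold
    {E : Type*} [NormedAddCommGroup E] [InnerProductSpace ℝ E] [FiniteDimensional ℝ E]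
    (φ : E → ℝ) (hdiff : Differentiable ℝ φ)
    (hconv : StrictConvexOn ℝ Set.univ φ)
    (hcoer : Filter.Tendsto (fun x => φ x / ‖x‖) (Filter.cocompact E) Filter.atTop)
    (φstar : E → ℝ) (hφstar : ∀ y : E, φstar y = ⨆ x : E, (⟪y, x⟫ - φ x))
    (V : Submodule ℝ E) (x₀ yP xEQ : E)
    (hEQmem : xEQ - x₀ ∈ V) (hEQ : gradient φ xEQ - yP ∈ Vᗮ) :
    ∀ x : E, x - x₀ ∈ V → x ≠ xEQ →
      φstar yP - φstar (gradient φ xEQ) - ⟪xEQ, yP - gradient φ xEQ⟫ <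
        φstar yP - φstar (gradient φ x) - ⟪x, yP - gradient φ x⟫ := by
  intro x hx hne
  have hfx : φstar (gradient φ x) = ⟪gradient φ x, x⟫ - φ x := by
    rw [hφstar]; exact aux_fenchel φ hdiff hconv x
  have hfe : φstar (gradient φ xEQ) = ⟪gradient φ xEQ, xEQ⟫ - φ xEQ := by
    rw [hφstar]; exact aux_fenchel φ hdiff hconv xEQ
  have hmem : x - xEQ ∈ V := by
    have := V.sub_mem hx hEQmem
    simpa using this
  have horth : ⟪x - xEQ, gradient φ xEQ - yP⟫ = 0 :=
    (Submodule.mem_orthogonal V _).mp hEQ _ hmem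
  have hkey : ⟪gradient φ xEQ, x - xEQ⟫ < φ x - φ xEQ :=
    aux_grad_lt φ hdiff hconv hne
  rw [hfx, hfe]
  simp only [inner_sub_left, inner_sub_right] at horth hkey
  have c1 : ⟪xEQ, yP - gradient φ xEQ⟫ = ⟪xEQ, yP⟫ - ⟪xEQ, gradient φ xEQ⟫ :=
    inner_sub_right _ _ _
  have c2 : ⟪x, yP - gradient φ x⟫ = ⟪x, yP⟫ - ⟪x, gradient φ x⟫ :=
    inner_sub_right _ _ _
  have c3 : ⟪gradient φ x, x⟫ = ⟪x, gradient φ x⟫ := real_inner_comm _ _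
  have c4 : ⟪gradient φ xEQ, xEQ⟫ = ⟪xEQ, gradient φ xEQ⟫ := real_inner_comm _ _
  have c5 : ⟪x, gradient φ xEQ⟫ = ⟪gradient φ xEQ, x⟫ := real_inner_comm _ _
  linarith
end

section
/- (Birch's theorem) Let n be a positive integer, let V ⊆ ℝⁿ be a linear subspace, and let x₀, Γ ∈ ℝⁿ with x₀ᵢ > 0 and Γᵢ > 0 for all i. Then there exists a unique x ∈ ℝⁿ with xᵢ > 0 for all i such that x − x₀ ∈ V and the vector (log(xᵢ/Γᵢ))ᵢ lies in V^⊥. Equivalently, the toric model {x : xᵢ = Γᵢ e^{(u)ᵢ}, u ∈ V^⊥} intersects the affine subspace x₀ + V in exactly one point of the positive orthant. -/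
/-!
Existence: minimize the coercive potential `u ↦ ∑ᵢ Γᵢ exp uᵢ - x₀ᵢ uᵢ` over
`Vᗮ`. At a minimizer `u` the gradient `Γ e^u - x₀` is orthogonal to `Vᗮ`, hence lies in `V`,
so `x = Γ e^u` works. Uniqueness: for two solutions `x, y`, the vector `x - y` lies in `V`
while `log x - log y` lies in `Vᗮ`, so `∑ᵢ (log xᵢ - log yᵢ)(xᵢ - yᵢ) = 0`; every summand is
nonnegative and vanishes only when `xᵢ = yᵢ`, since `log` is strictly increasing.
-/

open Real Filter Topology

theorem tendsto_mul_exp_sub_mul_cocompact {a b : ℝ} (ha : 0 < a) (hb : 0 < b) :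
    Tendsto (fun t => a * exp t - b * t) (cocompact ℝ) atTop := by
  rw [cocompact_eq_atBot_atTop, tendsto_sup]
  constructor
  · refine tendsto_atTop_mono (fun t => ?_) (tendsto_neg_atBot_atTop.const_mul_atTop hb)
    have := (mul_pos ha (exp_pos t)).le
    linarith
  · have hlin : Tendsto (fun t => a - b * (t * exp (-t))) atTop (𝓝 a) := by
      have := tendsto_pow_mul_exp_neg_atTop_nhds_zero 1
      simp only [pow_one] at this
      simpa using tendsto_const_nhds (x := a) |>.sub (this.const_mul b)
    refine (tendsto_exp_atTop.atTop_mul_pos ha hlin).congr fun t => ?_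
    rw [mul_sub, exp_neg]
    field_simp

theorem tendsto_sum_comp_eval_cocompact_atTop {ι : Type*} [Fintype ι] {X : ι → Type*}
    [∀ i, TopologicalSpace (X i)] {f : ∀ i, X i → ℝ} (hbdd : ∀ i, BddBelow (Set.range (f i)))
    (hf : ∀ i, Tendsto (f i) (cocompact (X i)) atTop) :
    Tendsto (fun x => ∑ i, f i (x i)) (cocompact (∀ i, X i)) atTop := by
  classical
  choose m hm using hbdd
  rw [← coprodᵢ_cocompact, Filter.coprodᵢ, tendsto_iSup]
  intro i
  refine tendsto_atTop_mono (fun x => ?_)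
    (tendsto_atTop_add_const_right _ (∑ j ∈ Finset.univ.erase i, m j)
      ((hf i).comp tendsto_comap))
  rw [← Finset.add_sum_erase _ _ (Finset.mem_univ i)]
  exact add_le_add_right (Finset.sum_le_sum fun j _ => hm j ⟨x j, rfl⟩) _

theorem IsMinOn.hasFDerivAt_eq_zero_of_mem_submodule {E : Type*} [NormedAddCommGroup E]
    [NormedSpace ℝ E] {F : E → ℝ} {F' : E →L[ℝ] ℝ} {W : Submodule ℝ E} {u : E} (hu : u ∈ W)
    (hmin : IsMinOn F W u) (hF : HasFDerivAt F F' u) {w : E} (hw : w ∈ W) : F' w = 0 := by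
  have hloc : IsLocalMin (F ∘ W.subtypeL) ⟨u, hu⟩ :=
    Filter.Eventually.of_forall fun v => hmin v.2
  have := hloc.hasFDerivAt_eq_zero (hF.comp _ W.subtypeL.hasFDerivAt)
  simpa using congrArg (fun L : W →L[ℝ] ℝ => L ⟨w, hw⟩) this

theorem log_sub_log_mul_sub_pos {a b : ℝ} (ha : 0 < a) (hb : 0 < b) (hab : a ≠ b) :
    0 < (log a - log b) * (a - b) := by
  rcases hab.lt_or_gt with h | h
  · exact mul_pos_of_neg_of_neg (sub_neg.2 (log_lt_log ha h)) (sub_neg.2 h)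
  · exact mul_pos (sub_pos.2 (log_lt_log hb h)) (sub_pos.2 h)

section DotProduct

variable {ι : Type*} [Fintype ι]

theorem dotProductBilin_nondegenerate :
    (dotProductBilin ℝ ℝ : LinearMap.BilinForm ℝ (ι → ℝ)).Nondegenerate :=
  ⟨fun x hx => dotProduct_self_eq_zero.1 (hx x), fun y hy => dotProduct_self_eq_zero.1 (hy y)⟩

theorem dotProductBilin_isRefl :
    (dotProductBilin ℝ ℝ : LinearMap.BilinForm ℝ (ι → ℝ)).IsRefl :=
  fun x y h => by simpa [dotProduct_comm] using h

theorem exists_mem_forall_mul_exp_sub_dotProduct_eq_zero (W : Submodule ℝ (ι → ℝ))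
    {x₀ Γ : ι → ℝ} (hx₀ : ∀ i, 0 < x₀ i) (hΓ : ∀ i, 0 < Γ i) :
    ∃ u ∈ W, ∀ w ∈ W, (fun i => Γ i * exp (u i) - x₀ i) ⬝ᵥ w = 0 := by
  set F : (ι → ℝ) → ℝ := fun v => ∑ i, (Γ i * exp (v i) - x₀ i * v i)
  have hcoord : ∀ i, Tendsto (fun t => Γ i * exp t - x₀ i * t) (cocompact ℝ) atTop :=
    fun i => tendsto_mul_exp_sub_mul_cocompact (hΓ i) (hx₀ i)
  have hbdd : ∀ i, BddBelow (Set.range fun t => Γ i * exp t - x₀ i * t) := fun i => by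
    have hc : Continuous fun t => Γ i * exp t - x₀ i * t := by fun_prop
    obtain ⟨t, ht⟩ := hc.exists_forall_le (hcoord i)
    exact ⟨_, Set.forall_mem_range.2 ht⟩
  have hcoercive : Tendsto F (cocompact _) atTop :=
    tendsto_sum_comp_eval_cocompact_atTop hbdd hcoord
  obtain ⟨u, huW, hmin⟩ := (by fun_prop : Continuous F).continuousOn.exists_isMinOn'
    W.closed_of_finiteDimensional W.zero_mem
    ((hcoercive.eventually (eventually_ge_atTop (F 0))).filter_mono inf_le_left)
  have hF : HasFDerivAt F
      (∑ i, (Γ i * exp (u i) - x₀ i) • ContinuousLinearMap.proj (R := ℝ) (φ := fun _ : ι => ℝ) i)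
      u := by
    refine HasFDerivAt.fun_sum fun i _ => ?_
    have hi : HasFDerivAt (fun v : ι → ℝ => v i) (ContinuousLinearMap.proj (R := ℝ) i) u :=
      hasFDerivAt_apply i u
    exact ((hi.exp.const_mul (Γ i)).fun_sub (hi.const_mul (x₀ i))).congr_fderiv (by module)
  refine ⟨u, huW, fun w hw => ?_⟩
  simpa [dotProduct] using hmin.hasFDerivAt_eq_zero_of_mem_submodule huW hF hw

theorem eq_of_log_sub_log_dotProduct_sub_eq_zero {x y : ι → ℝ} (hx : ∀ i, 0 < x i)
    (hy : ∀ i, 0 < y i) (h : (fun i => log (x i) - log (y i)) ⬝ᵥ (x - y) = 0) : x = y := by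
  by_contra hne
  obtain ⟨i, hi⟩ := Function.ne_iff.1 hne
  refine h.not_gt (Finset.sum_pos' (fun j _ => ?_) ⟨i, Finset.mem_univ i, ?_⟩)
  · by_cases hj : x j = y j
    · simp [hj]
    · exact (log_sub_log_mul_sub_pos (hx j) (hy j) hj).le
  · exact log_sub_log_mul_sub_pos (hx i) (hy i) hi

end DotProduct

theorem birch_theorem_general
    {n : ℕ} (V : Submodule ℝ (Fin n → ℝ)) (x₀ Γ : Fin n → ℝ)
    (hx₀ : ∀ i, 0 < x₀ i) (hΓ : ∀ i, 0 < Γ i) :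
    ∃! x : Fin n → ℝ, (∀ i, 0 < x i) ∧ x - x₀ ∈ V ∧
      ∀ v ∈ V, ∑ i, Real.log (x i / Γ i) * v i = 0 := by
  set B : LinearMap.BilinForm ℝ (Fin n → ℝ) := dotProductBilin ℝ ℝ
  obtain ⟨u, huV, hu⟩ := exists_mem_forall_mul_exp_sub_dotProduct_eq_zero (B.orthogonal V) hx₀ hΓ
  set x : Fin n → ℝ := fun i => Γ i * exp (u i)
  have hx : ∀ i, 0 < x i := fun i => mul_pos (hΓ i) (exp_pos _)
  have hxV : x - x₀ ∈ V := by
    rw [← B.orthogonal_orthogonal dotProductBilin_nondegenerate dotProductBilin_isRefl V]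
    exact fun w hw => (dotProduct_comm _ _).trans (hu w hw)
  have hxo : ∀ v ∈ V, (fun i => log (x i / Γ i)) ⬝ᵥ v = 0 := fun v hv => by
    have hlog : (fun i => log (x i / Γ i)) = u := by
      ext i; simp [x, (hΓ i).ne']
    rw [hlog, dotProduct_comm]
    exact huV v hv
  refine ⟨x, ⟨hx, hxV, hxo⟩, ?_⟩
  rintro y ⟨hy, hyV, hyo⟩
  refine eq_of_log_sub_log_dotProduct_sub_eq_zero hy hx ?_
  have hsplit : (fun i => log (y i) - log (x i))
      = (fun i => log (y i / Γ i)) - fun i => log (x i / Γ i) := by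
    ext i
    rw [Pi.sub_apply, log_div (hy i).ne' (hΓ i).ne', log_div (hx i).ne' (hΓ i).ne']
    ring
  have hyx : y - x ∈ V := by simpa using V.sub_mem hyV hxV
  rw [hsplit, sub_dotProduct, hxo _ hyx, sub_zero]
  exact hyo _ hyx

/-- **Birch's theorem.**
For a linear subspace `V ⊆ ℝⁿ` and positive vectors `x₀, Γ`, there is a unique positive
vector `x` with `x - x₀ ∈ V` such that the vector `(log (xᵢ / Γᵢ))ᵢ` is orthogonal to `V`
(i.e. lies in `Vᗮ`); equivalently, the toric model `{x : xᵢ = Γᵢ e^{uᵢ}, u ∈ Vᗮ}`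
intersects the affine subspace `x₀ + V` in exactly one point of the positive orthant. -/
theorem birch_theorem
    {n : ℕ} (hn : 0 < n) (V : Submodule ℝ (Fin n → ℝ)) (x₀ Γ : Fin n → ℝ)
    (hx₀ : ∀ i, 0 < x₀ i) (hΓ : ∀ i, 0 < Γ i) :
    ∃! x : Fin n → ℝ, (∀ i, 0 < x i) ∧ x - x₀ ∈ V ∧
      ∀ v ∈ V, ∑ i, Real.log (x i / Γ i) * v i = 0 :=
  birch_theorem_general V x₀ Γ hx₀ hΓ
end
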